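/- arXiv:2209.13998 — 2 statements merged into one kernel-verified Lean document; each statement's English description precedes it below -/
import Mathlib

section
/- Let G = (V, E) be a finite graph, T > 0, p = 1 − exp(−2/T), and h : V → ℝ, with Edwards–Sokal weight w_h(σ, ω) = Π_{e={x,y}∈E} [(1−p)·1{ω(e)=0} + p·1{ω(e)=1}·1{σ_x = σ_y}] · exp((1/T) Σ_{x∈V} σ_x h_x). Then for every ω ∈ {0,1}^E, Σ_{σ∈{−1,1}^V} w_h(σ, ω) = Π_{e∈E} p^{ω(e)} (1−p)^{1−ω(e)} · Π_{j=1}^{η(ω)} 2 cosh(h_{𝒞_j} / T), where 𝒞_1, …, 𝒞_{η(ω)} are the open clusters of ω (connected components of the graph (V, {e : ω(e) = 1})), η(ω) is their number, h_A = Σ_{x∈A} h_x, and cosh z = (e^z + e^{−z})/2. -/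
/-!
A closed edge contributes `1 - p = exp(-2/T)` to the weight and an open edge `{x, y}` contributes
`p · 1{σ_x = σ_y}`, so the edge product is the Bernoulli factor of `ω` when `σ` is constant on every
open cluster and `0` otherwise. Spin configurations constant on the clusters are exactly the
assignments of one spin `b_C` to each cluster `C`, and the field term `exp((1/T) Σ_x σ_x h_x)`
factorizes as `Π_C exp(b_C h_C / T)`; summing each factor over `b_C = ±1` gives `2 cosh(h_C / T)`.
-/

open scoped BigOperators
open Finset

noncomputable section

namespace EdwardsSokal

open scoped Classical

variable {V : Type}

/-- The `±1`-spin attached to a Boolean. -/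
def spin (b : Bool) : ℝ := if b then 1 else -1

/-- The indicator `1{σ_x = σ_y}` of agreement of the two spins on an unordered pair. -/
def agreeInd (σ : V → Bool) : Sym2 V → ℝ :=
  Sym2.lift ⟨fun x y => if σ x = σ y then (1 : ℝ) else 0, fun x y => by simp [eq_comm]⟩

/-- The product `σ_x σ_y` of the two spins on an unordered pair. -/
def pairSpin (σ : V → Bool) : Sym2 V → ℝ :=
  Sym2.lift ⟨fun x y => spin (σ x) * spin (σ y), fun x y => mul_comm _ _⟩

/-- The Edwards–Sokal weight
`w_h(σ, ω) = Π_{e = {x,y} ∈ E} [(1-p) 1{ω(e)=0} + p 1{ω(e)=1} 1{σ_x = σ_y}] ·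
  exp((1/T) Σ_x σ_x h_x)` with `p = 1 - exp(-2/T)` (so `1 - p = exp(-2/T)`). -/
def esWeight [Fintype V] (E : Finset (Sym2 V)) (T : ℝ) (h : V → ℝ)
    (σ : V → Bool) (ω : {e : Sym2 V // e ∈ E} → Bool) : ℝ :=
  (∏ e : {e : Sym2 V // e ∈ E},
      (Real.exp (-2 / T) * (if ω e = false then 1 else 0) +
        (1 - Real.exp (-2 / T)) * (if ω e = true then 1 else 0) * agreeInd σ e.1)) *
    Real.exp ((1 / T) * ∑ x, spin (σ x) * h x)


/-- Connectivity by open edges of `ω`. -/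
def openConn [Fintype V] (E : Finset (Sym2 V)) (ω : {e : Sym2 V // e ∈ E} → Bool) :
    V → V → Prop :=
  Relation.ReflTransGen fun x y =>
    ∃ e : {e : Sym2 V // e ∈ E}, ω e = true ∧ x ∈ e.1 ∧ y ∈ e.1 ∧ x ≠ y

/-- The open cluster of a vertex `x`. -/
def clusterOf [Fintype V] (E : Finset (Sym2 V)) (ω : {e : Sym2 V // e ∈ E} → Bool)
    (x : V) : Finset V :=
  Finset.univ.filter fun y => openConn E ω x y

/-- The collection of all open clusters of `ω` (isolated vertices count as
clusters); its cardinality is `η(ω)`. -/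
def clustersOf [Fintype V] (E : Finset (Sym2 V)) (ω : {e : Sym2 V // e ∈ E} → Bool) :
    Finset (Finset V) :=
  Finset.univ.image fun x => clusterOf E ω x

theorem sum_prod_comp_eq_prod_sum_prod_fiber {α ι β R : Type*} [Fintype α] [Fintype ι]
    [DecidableEq ι] [Fintype β] [CommSemiring R] (g : α → ι) (f : α → β → R) :
    ∑ s : ι → β, ∏ x, f x (s (g x)) = ∏ i, ∑ b, ∏ x with g x = i, f x b := by
  rw [Fintype.prod_sum]
  refine Fintype.sum_congr _ _ fun s => ?_
  rw [← prod_fiberwise univ g]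
  exact prod_congr rfl fun i _ => prod_congr rfl fun x hx => by rw [(mem_filter.1 hx).2]

theorem sum_filter_eq_sum_comp_of_surjective {α ι β M : Type*} [Fintype α] [DecidableEq α]
    [Fintype ι] [DecidableEq ι] [Fintype β] [AddCommMonoid M] {g : α → ι}
    [DecidablePred fun σ : α → β => ∀ x y, g x = g y → σ x = σ y] (hg : Function.Surjective g)
    (F : (α → β) → M) :
    ∑ σ with ∀ x y, g x = g y → σ x = σ y, F σ = ∑ s : ι → β, F (s ∘ g) := by
  refine (sum_nbij (· ∘ g) (fun s _ => ?_) hg.injective_comp_right.injOn (fun σ hσ => ?_)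
    fun _ _ => rfl).symm
  · simp +contextual
  · exact ⟨σ ∘ Function.surjInv hg, mem_univ _,
      funext fun x => (mem_filter.1 hσ).2 _ _ (Function.surjInv_eq hg (g x))⟩

theorem sum_exp_spin_mul (z : ℝ) : ∑ b : Bool, Real.exp (spin b * z) = 2 * Real.cosh z := by
  simp only [Fintype.sum_bool, spin, if_true, Bool.false_eq_true, if_false, one_mul, neg_one_mul,
    Real.cosh_eq]
  ring

section Clusters

variable [Fintype V] {E : Finset (Sym2 V)} {ω : {e : Sym2 V // e ∈ E} → Bool}

theorem openConn_symm {x y : V} (hxy : openConn E ω x y) : openConn E ω y x := by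
  induction hxy with
  | refl => exact .refl
  | tail _ hbc ih =>
    obtain ⟨e, he, hb, hc, hne⟩ := hbc
    exact ih.head ⟨e, he, hc, hb, hne.symm⟩

theorem mem_clusterOf {x y : V} : y ∈ clusterOf E ω x ↔ openConn E ω x y := by
  simp [clusterOf]

theorem clusterOf_eq_iff {x y : V} : clusterOf E ω x = clusterOf E ω y ↔ openConn E ω x y := by
  refine ⟨fun hxy => mem_clusterOf.1 (hxy ▸ mem_clusterOf.2 .refl), fun hxy => ?_⟩
  ext z
  simp only [mem_clusterOf]
  exact ⟨(openConn_symm hxy).trans, hxy.trans⟩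

theorem clusterOf_mem_clustersOf (x : V) : clusterOf E ω x ∈ clustersOf E ω :=
  mem_image_of_mem _ (mem_univ x)

theorem filter_clusterOf_eq {C : Finset V} (hC : C ∈ clustersOf E ω) :
    univ.filter (fun x => clusterOf E ω x = C) = C := by
  obtain ⟨z, -, rfl⟩ := mem_image.1 hC
  ext x
  simp only [mem_filter, mem_univ, true_and, clusterOf_eq_iff, mem_clusterOf]
  exact ⟨openConn_symm, openConn_symm⟩

theorem forall_open_edge_agree_iff {β : Type*} {σ : V → β} :
    (∀ e, ω e = true → ∀ x ∈ e.1, ∀ y ∈ e.1, σ x = σ y) ↔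
      ∀ x y, openConn E ω x y → σ x = σ y := by
  refine ⟨fun hσ x y hxy => ?_, fun hσ e he x hx y hy => ?_⟩
  · induction hxy with
    | refl => rfl
    | tail _ hbc ih =>
      obtain ⟨e, he, hb, hc, -⟩ := hbc
      exact ih.trans (hσ e he _ hb _ hc)
  · by_cases hxy : x = y
    · rw [hxy]
    · exact hσ x y (.single ⟨e, he, hx, hy, hxy⟩)

theorem sum_exp_spin_of_constant_on_clusters (g : V → ℝ) :
    ∑ σ : V → Bool with ∀ x y, openConn E ω x y → σ x = σ y,
        Real.exp (∑ x, spin (σ x) * g x) =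
      ∏ C ∈ clustersOf E ω, 2 * Real.cosh (∑ x ∈ C, g x) := by
  let c : V → clustersOf E ω := fun x => ⟨clusterOf E ω x, clusterOf_mem_clustersOf x⟩
  have hc : Function.Surjective c := by
    rintro ⟨C, hC⟩
    obtain ⟨x, -, rfl⟩ := mem_image.1 hC
    exact ⟨x, rfl⟩
  have hfiber (C : clustersOf E ω) : univ.filter (fun x => c x = C) = C.1 := by
    simpa only [c, Subtype.ext_iff] using filter_clusterOf_eq C.2
  have hconst (σ : V → Bool) :
      (∀ x y, openConn E ω x y → σ x = σ y) ↔ ∀ x y, c x = c y → σ x = σ y := by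
    simp only [c, Subtype.ext_iff, clusterOf_eq_iff]
  rw [filter_congr fun σ _ => hconst σ, sum_filter_eq_sum_comp_of_surjective hc]
  simp only [Real.exp_sum, Function.comp_apply]
  rw [sum_prod_comp_eq_prod_sum_prod_fiber c fun x b => Real.exp (spin b * g x)]
  simp only [hfiber, ← Real.exp_sum, ← mul_sum, sum_exp_spin_mul]
  exact prod_coe_sort (clustersOf E ω) fun C => 2 * Real.cosh (∑ x ∈ C, g x)

end Clusters

theorem agreeInd_eq_ite (σ : V → Bool) (e : Sym2 V) :
    agreeInd σ e = if ∀ x ∈ e, ∀ y ∈ e, σ x = σ y then 1 else 0 := by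
  induction e using Sym2.ind with
  | _ a b => by_cases hab : σ a = σ b <;> simp [agreeInd, hab, eq_comm]

theorem esWeight_eq [Fintype V] (E : Finset (Sym2 V)) (T : ℝ) (h : V → ℝ) (σ : V → Bool)
    (ω : {e : Sym2 V // e ∈ E} → Bool) :
    esWeight E T h σ ω =
      (∏ e : {e : Sym2 V // e ∈ E},
          if ω e then 1 - Real.exp (-2 / T) else Real.exp (-2 / T)) *
        if ∀ x y, openConn E ω x y → σ x = σ y then
          Real.exp ((1 / T) * ∑ x, spin (σ x) * h x)
        else 0 := by
  have hedge (e : {e : Sym2 V // e ∈ E}) :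
      Real.exp (-2 / T) * (if ω e = false then 1 else 0) +
          (1 - Real.exp (-2 / T)) * (if ω e = true then 1 else 0) * agreeInd σ e.1 =
        (if ω e then 1 - Real.exp (-2 / T) else Real.exp (-2 / T)) *
          if ω e = true → ∀ x ∈ e.1, ∀ y ∈ e.1, σ x = σ y then 1 else 0 := by
    cases ω e <;> simp [agreeInd_eq_ite]
  rw [esWeight, prod_congr rfl fun e _ => hedge e, prod_mul_distrib, prod_boole]
  simp only [mem_univ, true_implies, forall_open_edge_agree_iff]
  rw [mul_assoc, ite_mul, one_mul, zero_mul]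

theorem statement13_general [Fintype V] [DecidableEq V] (E : Finset (Sym2 V))
    (T : ℝ) (h : V → ℝ)
    (ω : {e : Sym2 V // e ∈ E} → Bool) :
    ∑ σ : V → Bool, esWeight E T h σ ω =
      (∏ e : {e : Sym2 V // e ∈ E},
          if ω e then 1 - Real.exp (-2 / T) else Real.exp (-2 / T)) *
        ∏ C ∈ clustersOf E ω, 2 * Real.cosh ((∑ x ∈ C, h x) / T) := by
  simp_rw [esWeight_eq, ← mul_sum, ← sum_filter]
  congr 1
  convert sum_exp_spin_of_constant_on_clusters (E := E) (ω := ω) fun x => h x / T using 3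
  · -- the two `univ`s differ in their `DecidableEq V` instance
    congr
    exact Subsingleton.elim _ _
  · rw [one_div_mul_eq_div, sum_div]
    simp only [mul_div_assoc]
  · rw [sum_div]

/-- **Lemma (Edwards–Sokal marginal on percolation configurations).** For every `ω`,
`Σ_σ w_h(σ, ω) = Π_{e ∈ E} p^{ω(e)} (1-p)^{1-ω(e)} · Π_{j=1}^{η(ω)} 2 cosh(h_{𝒞_j}/T)`,
the product being over the open clusters of `ω`. -/
theorem statement13 [Fintype V] [DecidableEq V] (E : Finset (Sym2 V))
    (hE : ∀ e ∈ E, ¬ e.IsDiag) (T : ℝ) (hT : 0 < T) (h : V → ℝ)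
    (ω : {e : Sym2 V // e ∈ E} → Bool) :
    ∑ σ : V → Bool, esWeight E T h σ ω =
      (∏ e : {e : Sym2 V // e ∈ E},
          if ω e then 1 - Real.exp (-2 / T) else Real.exp (-2 / T)) *
        ∏ C ∈ clustersOf E ω, 2 * Real.cosh ((∑ x ∈ C, h x) / T) :=
  statement13_general E T h ω

end EdwardsSokal
end
end

section
/- Let N ≥ 1, Λ = [−N,N]³ ∩ ℤ³, and let ∂_i Λ be the set of vertices of Λ having a nearest neighbor outside Λ. Suppose 𝖠 ⊆ Λ is connected (with respect to nearest-neighbor adjacency in ℤ³) and let 𝖴 be a connected component of Λ ∖ 𝖠 with 𝖴 ∩ ∂_i Λ = ∅. Then 𝖴 is simply connected in the sense that ψ(𝖴) = 𝖴, where ψ(𝖴) = {v ∈ Λ : every nearest-neighbor path in Λ from v to ∂_i Λ intersects 𝖴}. -/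
open Finset

noncomputable section

namespace Lattice

open scoped Classical

abbrev V : Type := Fin 3 → ℤ

/-- The box `Λ = [-N, N]³ ∩ ℤ³`. -/
def box (N : ℕ) : Finset V := Fintype.piFinset fun _ => Finset.Icc (-(N : ℤ)) (N : ℤ)

/-- The nearest neighbors of a vertex of `ℤ³` (`ℓ¹`-distance 1). -/
def nbrs (u : V) : Finset V :=
  (Finset.univ : Finset (Fin 3 × Bool)).image fun p =>
    Function.update u p.1 (u p.1 + if p.2 then 1 else -1)

/-- Connectivity of a finite set of vertices with respect to nearest-neighbor
adjacency. -/
def FinsetConn (S : Finset V) : Prop :=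
  ∀ x ∈ S, ∀ y ∈ S, Relation.ReflTransGen (fun a b => a ∈ S ∧ b ∈ S ∧ b ∈ nbrs a) x y

/-- The nearest-neighbor connected component of `x` inside `S`. -/
def compOf (S : Finset V) (x : V) : Finset V :=
  S.filter fun y => Relation.ReflTransGen (fun a b => a ∈ S ∧ b ∈ S ∧ b ∈ nbrs a) x y

/-- The internal boundary `∂_i Λ_N`: vertices of the box having a neighbor outside. -/
def ibdry (N : ℕ) : Finset V := (box N).filter fun v => ∃ w ∈ nbrs v, w ∉ box N

/-- `ψ(A)`: the set of vertices `v ∈ Λ_N` such that every nearest-neighbor path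
in `Λ_N` from `v` to `∂_i Λ_N` meets `A`. -/
def psi (N : ℕ) (A : Finset V) : Finset V :=
  (box N).filter fun v => v ∈ A ∨
    ∀ w ∈ ibdry N, ¬ Relation.ReflTransGen
      (fun x y => y ∈ nbrs x ∧ x ∈ box N ∧ x ∉ A ∧ y ∈ box N ∧ y ∉ A) v w

/-!
Take `v ∈ Λ ∖ U` and a path in `Λ` from `v` to a corner of the box, which lies in `∂_i Λ` and
hence outside `U`. Since `U` is a component of `Λ ∖ A`, every neighbour of `U` in `Λ` outside `U`
lies in `A`; so each excursion of the path into `U` is entered and left through `A`, and can be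
replaced by a path inside the connected set `A`, which is disjoint from `U`. The result is a path
from `v` to `∂_i Λ` avoiding `U`, so `v ∉ ψ(U)`.
-/

section Reachability

variable {α : Type*} (r : α → α → Prop)

def ReachableIn (S : Set α) : α → α → Prop :=
  Relation.ReflTransGen fun a b => a ∈ S ∧ b ∈ S ∧ r a b

variable {r}

theorem ReachableIn.mono {S T : Set α} (hST : S ⊆ T) {x y : α} (h : ReachableIn r S x y) :
    ReachableIn r T x y :=
  Relation.ReflTransGen.mono (fun _ _ ⟨ha, hb, hab⟩ => ⟨hST ha, hST hb, hab⟩) _ _ h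

theorem ReachableIn.symm [Std.Symm r] {S : Set α} {x y : α} (h : ReachableIn r S x y) :
    ReachableIn r S y x := by
  induction h with
  | refl => exact .refl
  | tail _ hbc ih =>
    exact Relation.ReflTransGen.head (r := fun a b => a ∈ S ∧ b ∈ S ∧ r a b)
      ⟨hbc.2.1, hbc.1, Std.Symm.symm _ _ hbc.2.2⟩ ih

theorem ReachableIn.diff_of_boundary_subset_connected [Std.Symm r] {Λ A U : Set α} (hAΛ : A ⊆ Λ)
    (hA : ∀ a ∈ A, ∀ b ∈ A, ReachableIn r A a b) (hAU : Disjoint A U)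
    (hU : ∀ y ∈ U, ∀ z ∈ Λ, r y z → z ∈ U ∪ A) {x y : α} (hx : x ∉ U) (hy : y ∉ U)
    (h : ReachableIn r Λ x y) : ReachableIn r (Λ \ U) x y := by
  have hA' : ∀ a ∈ A, ∀ b ∈ A, ReachableIn r (Λ \ U) a b := fun a ha b hb =>
    (hA a ha b hb).mono (Set.subset_sdiff.mpr ⟨hAΛ, hAU⟩)
  suffices ∀ z, ReachableIn r Λ x z →
      (z ∉ U → ReachableIn r (Λ \ U) x z) ∧ (z ∈ U → ∀ a ∈ A, ReachableIn r (Λ \ U) x a) from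
    (this y h).1 hy
  intro z hz
  induction hz with
  | refl => exact ⟨fun _ => .refl, fun h => absurd h hx⟩
  | @tail b c _ hbc ih =>
    obtain ⟨hb, hc, hbc⟩ := hbc
    by_cases hbU : b ∈ U <;> by_cases hcU : c ∈ U
    · exact ⟨fun h => absurd hcU h, fun _ => ih.2 hbU⟩
    · have hcA : c ∈ A := (hU b hbU c hc hbc).resolve_left hcU
      obtain ⟨a, ha⟩ : ∃ a, a ∈ A := ⟨c, hcA⟩
      exact ⟨fun _ => (ih.2 hbU a ha).trans (hA' a ha c hcA), fun h => absurd h hcU⟩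
    · have hbA : b ∈ A := (hU c hcU b hb (Std.Symm.symm _ _ hbc)).resolve_left hbU
      exact ⟨fun h => absurd hcU h, fun _ a ha => (ih.1 hbU).trans (hA' b hbA a ha)⟩
    · exact ⟨fun _ => (ih.1 hbU).tail ⟨⟨hb, hbU⟩, ⟨hc, hcU⟩, hbc⟩, fun h => absurd h hcU⟩

end Reachability

theorem mem_box {N : ℕ} {v : V} : v ∈ box N ↔ ∀ i, -(N : ℤ) ≤ v i ∧ v i ≤ N := by
  simp [box, Fintype.mem_piFinset, Finset.mem_Icc]

theorem update_mem_box {N : ℕ} {v : V} (hv : v ∈ box N) (i : Fin 3) {t : ℤ}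
    (ht : -(N : ℤ) ≤ t ∧ t ≤ N) : Function.update v i t ∈ box N := by
  rw [mem_box] at hv ⊢
  intro j
  rcases eq_or_ne j i with rfl | hj
  · simpa using ht
  · simpa [hj] using hv j

theorem mem_nbrs {u w : V} :
    w ∈ nbrs u ↔ ∃ (i : Fin 3) (b : Bool), w = Function.update u i (u i + if b then 1 else -1) := by
  simp only [nbrs, mem_image, mem_univ, true_and, Prod.exists, eq_comm]

theorem update_add_one_mem_nbrs (u : V) (i : Fin 3) : Function.update u i (u i + 1) ∈ nbrs u :=
  mem_nbrs.mpr ⟨i, true, by simp⟩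

def Adj (u w : V) : Prop := w ∈ nbrs u

instance : Std.Symm Adj where
  symm u w h := by
    obtain ⟨i, b, rfl⟩ := mem_nbrs.mp h
    refine mem_nbrs.mpr ⟨i, !b, ?_⟩
    ext j
    rcases eq_or_ne j i with rfl | hj
    · cases b <;> simp
    · simp [hj]

theorem reachableIn_box_update_of_le {N : ℕ} {v : V} (hv : v ∈ box N) (i : Fin 3) {t : ℤ}
    (hvt : v i ≤ t) (ht : t ≤ N) : ReachableIn Adj (box N) v (Function.update v i t) := by
  induction t, hvt using Int.leInduction with
  | base => rw [Function.update_eq_self]; exact .refl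
  | succ t hvt ih =>
    have hvi := (mem_box.mp hv i).1
    refine (ih (by omega)).tail ⟨update_mem_box hv i ⟨by omega, by omega⟩,
      update_mem_box hv i ⟨by omega, ht⟩, ?_⟩
    have h := update_add_one_mem_nbrs (Function.update v i t) i
    rwa [Function.update_self, Function.update_idem] at h

theorem reachableIn_box_update {N : ℕ} {v : V} (hv : v ∈ box N) (i : Fin 3) {t : ℤ}
    (ht : -(N : ℤ) ≤ t ∧ t ≤ N) : ReachableIn Adj (box N) v (Function.update v i t) := by
  rcases le_total (v i) t with hvt | htv
  · exact reachableIn_box_update_of_le hv i hvt ht.2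
  · have h := reachableIn_box_update_of_le (update_mem_box hv i ht) i (by simpa using htv)
      (mem_box.mp hv i).2
    simpa using h.symm

theorem reachableIn_box {N : ℕ} {v w : V} (hv : v ∈ box N) (hw : w ∈ box N) :
    ReachableIn Adj (box N) v w := by
  have hw' := mem_box.mp hw
  set v₁ := Function.update v 0 (w 0)
  set v₂ := Function.update v₁ 1 (w 1)
  have hv₁ : v₁ ∈ box N := update_mem_box hv 0 (hw' 0)
  have hv₂ : v₂ ∈ box N := update_mem_box hv₁ 1 (hw' 1)
  have hv₃ : Function.update v₂ 2 (w 2) = w := by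
    ext j
    fin_cases j <;> simp [v₁, v₂]
  rw [← hv₃]
  exact (reachableIn_box_update hv 0 (hw' 0)).trans <|
    (reachableIn_box_update hv₁ 1 (hw' 1)).trans (reachableIn_box_update hv₂ 2 (hw' 2))

theorem corner_mem_ibdry (N : ℕ) : (fun _ => (N : ℤ)) ∈ ibdry N := by
  have hc : (fun _ => (N : ℤ)) ∈ box N := mem_box.mpr fun _ => ⟨by omega, le_rfl⟩
  refine mem_filter.mpr ⟨hc, _, update_add_one_mem_nbrs _ 0, fun h => ?_⟩
  simpa using (mem_box.mp h 0).2

theorem compOf_subset (S : Finset V) (v : V) : compOf S v ⊆ S :=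
  filter_subset _ _

theorem mem_compOf_sdiff_or_mem_of_adj {Λ A : Finset V} {v y z : V} (hy : y ∈ compOf (Λ \ A) v)
    (hz : z ∈ Λ) (hyz : Adj y z) : z ∈ compOf (Λ \ A) v ∨ z ∈ A := by
  rw [or_iff_not_imp_right]
  intro hzA
  have hz' : z ∈ Λ \ A := mem_sdiff.mpr ⟨hz, hzA⟩
  rw [compOf, mem_filter] at hy ⊢
  exact ⟨hz', hy.2.tail ⟨hy.1, hz', hyz⟩⟩

theorem subset_psi {N : ℕ} {U : Finset V} (hU : U ⊆ box N) : U ⊆ psi N U :=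
  fun _ hv => mem_filter.mpr ⟨hU hv, .inl hv⟩

theorem notMem_psi_of_reachableIn {N : ℕ} {U : Finset V} {v w : V} (hv : v ∉ U)
    (hw : w ∈ ibdry N) (h : ReachableIn Adj (↑(box N) \ ↑U) v w) : v ∉ psi N U := by
  rw [psi, mem_filter, not_and_or, not_or, not_forall]
  refine .inr ⟨hv, w, fun h' => h' hw ?_⟩
  refine Relation.ReflTransGen.mono ?_ _ _ h
  rintro a b ⟨⟨ha, haU⟩, ⟨hb, hbU⟩, hab⟩
  exact ⟨hab, ha, haU, hb, hbU⟩

theorem statement17_general (N : ℕ) (A U : Finset V)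
    (hA : A ⊆ box N) (hAconn : FinsetConn A)
    (hU : ∃ v, v ∈ box N ∧ v ∉ A ∧ U = compOf (box N \ A) v)
    (hUb : U ∩ ibdry N = ∅) :
    psi N U = U := by
  obtain ⟨v₀, -, -, rfl⟩ := hU
  set U := compOf (box N \ A) v₀
  have hUΛA : U ⊆ box N \ A := compOf_subset _ _
  have hUclosed : ∀ y ∈ (U : Set V), ∀ z ∈ (box N : Set V), Adj y z → z ∈ (U : Set V) ∪ A :=
    fun _ hy _ hz hyz => mem_compOf_sdiff_or_mem_of_adj hy hz hyz
  have hAconn' : ∀ a ∈ (A : Set V), ∀ b ∈ (A : Set V), ReachableIn Adj A a b := hAconn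
  have hAU : Disjoint (A : Set V) U :=
    Set.disjoint_right.mpr fun u hu => (mem_sdiff.mp (hUΛA hu)).2
  have hcU : (fun _ => (N : ℤ)) ∉ U := fun hc =>
    notMem_empty _ (hUb ▸ mem_inter.mpr ⟨hc, corner_mem_ibdry N⟩)
  refine Subset.antisymm (fun v hv => ?_) (subset_psi fun u hu => (mem_sdiff.mp (hUΛA hu)).1)
  by_contra hvU
  have hvc : ReachableIn Adj (box N) v (fun _ => (N : ℤ)) :=
    reachableIn_box (mem_filter.mp hv).1 (mem_filter.mp (corner_mem_ibdry N)).1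
  exact notMem_psi_of_reachableIn hvU (corner_mem_ibdry N)
    (hvc.diff_of_boundary_subset_connected (by exact_mod_cast hA) hAconn' hAU hUclosed hvU hcU) hv

/-- **Lemma (holes of connected sets are simply connected).** Let `A ⊆ Λ_N` be
connected and let `U` be a connected component of `Λ_N ∖ A` not meeting `∂_i Λ_N`.
Then `ψ(U) = U`. -/
theorem statement17 (N : ℕ) (hN : 1 ≤ N) (A U : Finset V)
    (hA : A ⊆ box N) (hAconn : FinsetConn A)
    (hU : ∃ v, v ∈ box N ∧ v ∉ A ∧ U = compOf (box N \ A) v)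
    (hUb : U ∩ ibdry N = ∅) :
    psi N U = U :=
  statement17_general N A U hA hAconn hU hUb

end Lattice
end
end
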